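/- Let V be a finite-dimensional complex inner product space, β a self-adjoint endomorphism of V with largest eigenvalue λ₁ and eigenspace W = ker(β − λ₁). If g is an invertible endomorphism of V such that lim_{t → −∞} exp(tβ) g exp(−tβ) = id_V, then g w = w for every w ∈ W; in particular g acts as the identity on ℙ(W). -/

import Mathlib

/-!
Let `u = g w`. Conjugating by `exp(tβ)` and applying to `w ∈ W` gives
`exp(tβ) g exp(-tβ) w = e^{-tλ₁} exp(tβ) u → w` as `t → -∞`. Pairing with an eigenvector `v`
of eigenvalue `μ ≤ λ₁` turns this into `e^{t(μ - λ₁)} ⟪v, u⟫ → ⟪v, w⟫`: for `μ < λ₁` the factor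
blows up, forcing `⟪v, u⟫ = 0 = ⟪v, w⟫`, and for `μ = λ₁` it is constant. So `u - w` is orthogonal
to every eigenspace of `β`, which together span `V`.
-/

open Filter Topology NormedSpace Module.End

theorem NormedSpace.exp_apply_of_apply_eq_smul {𝕜 E : Type*} [RCLike 𝕜] [NormedAddCommGroup E]
    [NormedSpace 𝕜 E] [CompleteSpace E] {A : E →L[𝕜] E} {c : 𝕜} {v : E} (hv : A v = c • v) :
    exp A v = exp c • v := by
  have hpow (n : ℕ) : (A ^ n) v = c ^ n • v := by
    induction n with
    | zero => simp
    | succ n ih =>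
      rw [pow_succ', mul_apply_eq_comp, ih, map_smul, hv, smul_smul, ← pow_succ]
  have hA := (exp_series_hasSum_exp' (𝕂 := 𝕜) A).mapL (ContinuousLinearMap.apply 𝕜 E v)
  simp only [ContinuousLinearMap.apply_apply, smul_apply, hpow, smul_smul] at hA
  exact hA.unique ((exp_series_hasSum_exp' (𝕂 := 𝕜) c).smul_const v)

theorem NormedSpace.exp_smul_apply_of_apply_eq_ofReal_smul {𝕜 E : Type*} [RCLike 𝕜]
    [NormedAddCommGroup E] [NormedSpace 𝕜 E] [NormedSpace ℝ E] [IsScalarTower ℝ 𝕜 E]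
    [CompleteSpace E] {A : E →L[𝕜] E} {μ : ℝ} {v : E} (hv : A v = (μ : 𝕜) • v) (t : ℝ) :
    exp (t • A) v = Real.exp (t * μ) • v := by
  have htA : (t • A) v = ((t * μ : ℝ) : 𝕜) • v := by
    rw [smul_apply, hv, RCLike.ofReal_mul, mul_smul, RCLike.real_smul_eq_coe_smul (K := 𝕜)]
  rw [exp_apply_of_apply_eq_smul htA, Real.exp_eq_exp_ℝ,
    ← map_exp (algebraMap ℝ 𝕜) (by fun_prop), RCLike.algebraMap_eq_ofReal,
    RCLike.real_smul_eq_coe_smul (K := 𝕜)]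

theorem IsSelfAdjoint.inner_exp_smul_apply_of_apply_eq_ofReal_smul {𝕜 E : Type*} [RCLike 𝕜]
    [NormedAddCommGroup E] [InnerProductSpace 𝕜 E] [NormedSpace ℝ E] [IsScalarTower ℝ 𝕜 E]
    [CompleteSpace E] {A : E →L[𝕜] E} (hA : IsSelfAdjoint A) {μ : ℝ} {v : E}
    (hv : A v = (μ : 𝕜) • v) (t : ℝ) (u : E) :
    inner 𝕜 v (NormedSpace.exp (t • A) u) = Real.exp (t * μ) • inner 𝕜 v u := by
  have htA : IsSelfAdjoint (t • A) := by
    rw [RCLike.real_smul_eq_coe_smul (K := 𝕜)]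
    exact IsSelfAdjoint.smul (RCLike.conj_ofReal t) hA
  rw [← htA.exp.adjoint_eq, ContinuousLinearMap.adjoint_inner_right,
    exp_smul_apply_of_apply_eq_ofReal_smul hv, inner_smul_left_eq_smul]

theorem LinearMap.IsSymmetric.eq_of_forall_inner_eigenvector_eq {𝕜 E : Type*} [RCLike 𝕜]
    [NormedAddCommGroup E] [InnerProductSpace 𝕜 E] [FiniteDimensional 𝕜 E] {T : E →ₗ[𝕜] E}
    (hT : T.IsSymmetric) {x y : E}
    (h : ∀ (μ : ℝ) (v : E), HasEigenvector T (μ : 𝕜) v → inner 𝕜 v x = inner 𝕜 v y) :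
    x = y := by
  rw [← sub_eq_zero, ← Submodule.mem_bot 𝕜, ← hT.orthogonalComplement_iSup_eigenspaces_eq_bot,
    ← Submodule.iInf_orthogonal, Submodule.mem_iInf]
  intro μ
  rw [Submodule.mem_orthogonal]
  intro v hv
  rcases eq_or_ne v 0 with rfl | hv0
  · exact inner_zero_left _
  have hev : HasEigenvector T μ v := ⟨hv, hv0⟩
  have hμ : ((RCLike.re μ : ℝ) : 𝕜) = μ := RCLike.conj_eq_iff_re.mp
    (hT.conj_eigenvalue_eq_self (hasEigenvalue_of_hasEigenvector hev))
  rw [inner_sub_right, sub_eq_zero]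
  exact h _ v (hμ ▸ hev)

theorem eq_of_tendsto_exp_mul_smul_atBot {E : Type*} [NormedAddCommGroup E] [NormedSpace ℝ E]
    {κ : ℝ} (hκ : κ ≤ 0) {c d : E} (h : Tendsto (fun t => Real.exp (t * κ) • c) atBot (𝓝 d)) :
    c = d := by
  rcases hκ.lt_or_eq with hκ | rfl
  · have hc : c = 0 := by
      by_contra hc
      have hexp : Tendsto (fun t => Real.exp (t * κ)) atBot atTop :=
        Real.tendsto_exp_atTop.comp (tendsto_id.atBot_mul_const_of_neg hκ)
      refine not_tendsto_atTop_of_tendsto_nhds h.norm ?_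
      simp_rw [norm_smul, Real.norm_of_nonneg (Real.exp_pos _).le]
      exact hexp.atTop_mul_const (norm_pos_iff.2 hc)
    subst hc
    simpa using h
  · simpa using h

/-- Let `β` be a self-adjoint endomorphism of a finite-dimensional complex
inner product space `V` with largest eigenvalue `λ₁` and eigenspace `W = ker (β - λ₁)`.
If `g` is an invertible endomorphism of `V` with `lim_{t → −∞} exp(tβ) g exp(−tβ) = id_V`,
then `g w = w` for every `w ∈ W`; in particular `g` acts as the identity on `ℙ(W)`. -/
theorem stmt_14 {V : Type*} [NormedAddCommGroup V] [InnerProductSpace ℂ V]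
    [FiniteDimensional ℂ V] (β : V →L[ℂ] V) (hβ : IsSelfAdjoint β) (lam₁ : ℝ)
    (hlam : IsGreatest {μ : ℝ |
      Module.End.HasEigenvalue ((β : V →ₗ[ℂ] V) : Module.End ℂ V) (μ : ℂ)} lam₁)
    (g : (V →L[ℂ] V)ˣ)
    (hg : Filter.Tendsto
      (fun t : ℝ =>
        NormedSpace.exp (t • β) * (g : V →L[ℂ] V) * NormedSpace.exp (-(t • β)))
      Filter.atBot (nhds (1 : V →L[ℂ] V))) :
    ∀ w ∈ Module.End.eigenspace ((β : V →ₗ[ℂ] V) : Module.End ℂ V) (lam₁ : ℂ),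
      (g : V →L[ℂ] V) w = w := by
  intro w hw
  refine hβ.isSymmetric.eq_of_forall_inner_eigenvector_eq fun μ v hv => ?_
  have hμ : μ ≤ lam₁ := hlam.2 (hasEigenvalue_of_hasEigenvector hv)
  have hlim : Tendsto (fun t : ℝ =>
      inner ℂ v ((exp (t • β) * (g : V →L[ℂ] V) * exp (-(t • β))) w)) atBot (𝓝 (inner ℂ v w)) :=
    ((innerSL ℂ v).continuous.tendsto w).comp
      (((ContinuousLinearMap.apply ℂ V w).continuous.tendsto 1).comp hg)
  refine eq_of_tendsto_exp_mul_smul_atBot (sub_nonpos.2 hμ) (hlim.congr fun t => ?_)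
  rw [← neg_smul, mul_apply_eq_comp, mul_apply_eq_comp,
    exp_smul_apply_of_apply_eq_ofReal_smul (mem_eigenspace_iff.mp hw),
    ContinuousLinearMap.map_smul_of_tower, ContinuousLinearMap.map_smul_of_tower,
    inner_smul_right_eq_smul, hβ.inner_exp_smul_apply_of_apply_eq_ofReal_smul hv.apply_eq_smul,
    smul_smul, ← Real.exp_add]
  congr 2
  ring
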